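/- arXiv:2410.22690 — 2 statements merged into one kernel-verified Lean document; each statement's English description precedes it below -/
import Mathlib

section
/- Corollary (advantage reward preserves value differences across policies, fixed-discount form): For every transition matrix P, all policies π, π', π̄, every reward function r : S × A → ℝ, every discount factor γ ∈ (0,1), and every state s ∈ S: V(π,P,r,γ)(s) − V(π',P,r,γ)(s) = V(π,P,r̃,γ)(s) − V(π',P,r̃,γ)(s), where r̃(s,a) = Δ(π̄,P,r,γ)(s,a). -/
open Filter Finset Topology

noncomputable section

variable {S A : Type} [Fintype S] [DecidableEq S] [Fintype A] [Nonempty S] [Nonempty A]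

/-- A policy assigns to each state a probability distribution over actions. -/
def IsPolicy (π : S → A → ℝ) : Prop :=
  (∀ s a, 0 ≤ π s a) ∧ ∀ s, ∑ a, π s a = 1

/-- A transition matrix assigns to each action and state a probability distribution
over next states. -/
def IsTransition (P : A → S → S → ℝ) : Prop :=
  (∀ a s s', 0 ≤ P a s s') ∧ ∀ a s, ∑ s', P a s s' = 1

/-- The state-transition matrix induced by a policy and a transition matrix. -/
def Mmat (π : S → A → ℝ) (P : A → S → S → ℝ) : Matrix S S ℝ :=
  Matrix.of fun s s' => ∑ a, π s a * P a s s'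

/-- Expected one-step reward under policy `π`. -/
def rpi (π : S → A → ℝ) (r : S × A → ℝ) (s : S) : ℝ := ∑ a, π s a * r (s, a)

/-- Discounted value function. -/
def Vval (π : S → A → ℝ) (P : A → S → S → ℝ) (r : S × A → ℝ) (γ : ℝ) (s : S) : ℝ :=
  ∑' t : ℕ, γ ^ t * ((Mmat π P ^ t).mulVec (rpi π r)) s

/-- State-action value function. -/
def Qval (π : S → A → ℝ) (P : A → S → S → ℝ) (r : S × A → ℝ) (γ : ℝ) (s : S) (a : A) : ℝ :=
  r (s, a) + γ * ∑ s', P a s s' * Vval π P r γ s'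

/-- Advantage function. -/
def Adv (π : S → A → ℝ) (P : A → S → S → ℝ) (r : S × A → ℝ) (γ : ℝ) (s : S) (a : A) : ℝ :=
  Qval π P r γ s a - Vval π P r γ s

/-! The advantage reward of `π̄` is `r` reshaped by the potential `Φ = V(π̄)`:
`r̃(s,a) = r(s,a) + γ ∑ P(s'|s,a) Φ(s') - Φ(s)`. For every policy `π`, both `V(π,r̃)` and
`V(π,r) - Φ` solve the Bellman equation `v = r̃π + γ M(π) v`, whose solution is unique because
`M(π)` is row-stochastic, so `v ↦ γ M(π) v` is a contraction for the sup norm. Hence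
`V(π,r̃) = V(π,r) - V(π̄,r)`, and `V(π̄,r)` cancels in differences of values. -/

namespace Matrix

variable {n : Type*} [Fintype n] [DecidableEq n] {M : Matrix n n ℝ} {γ : ℝ}

theorem norm_mulVec_le_of_mem_rowStochastic (hM : M ∈ rowStochastic ℝ n) (v : n → ℝ) :
    ‖M *ᵥ v‖ ≤ ‖v‖ := by
  refine (pi_norm_le_iff_of_nonneg (norm_nonneg v)).2 fun i => ?_
  calc ‖(M *ᵥ v) i‖ = |∑ j, M i j * v j| := rfl
    _ ≤ ∑ j, M i j * ‖v‖ := by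
        refine (abs_sum_le_sum_abs _ _).trans (sum_le_sum fun j _ => ?_)
        rw [abs_mul, abs_of_nonneg (nonneg_of_mem_rowStochastic hM)]
        exact mul_le_mul_of_nonneg_left (norm_le_pi_norm v j) (nonneg_of_mem_rowStochastic hM)
    _ = ‖v‖ := by rw [← sum_mul, sum_row_of_mem_rowStochastic hM, one_mul]

theorem summable_pow_smul_pow_mulVec (hM : M ∈ rowStochastic ℝ n) (hγ : |γ| < 1) (v : n → ℝ) :
    Summable fun t : ℕ => γ ^ t • (M ^ t *ᵥ v) := by
  refine .of_norm_bounded ((summable_geometric_of_lt_one (abs_nonneg γ) hγ).mul_right ‖v‖)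
    fun t => ?_
  rw [norm_smul, Real.norm_eq_abs, abs_pow]
  exact mul_le_mul_of_nonneg_left (norm_mulVec_le_of_mem_rowStochastic (pow_mem hM t) v)
    (by positivity)

theorem tsum_pow_smul_pow_mulVec_eq_add (hM : M ∈ rowStochastic ℝ n) (hγ : |γ| < 1)
    (w : n → ℝ) :
    ∑' t : ℕ, γ ^ t • (M ^ t *ᵥ w) = w + γ • (M *ᵥ ∑' t : ℕ, γ ^ t • (M ^ t *ᵥ w)) := by
  have hsum := summable_pow_smul_pow_mulVec hM hγ w
  have hcont : Continuous (γ • M.mulVecLin) := LinearMap.continuous_of_finiteDimensional _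
  have hshift := hsum.map_tsum (γ • M.mulVecLin) hcont
  simp only [LinearMap.smul_apply, mulVecLin_apply] at hshift
  rw [hshift, hsum.tsum_eq_zero_add]
  congr 1
  · simp
  · refine tsum_congr fun t => ?_
    rw [mulVec_smul, smul_smul, ← pow_succ', mulVec_mulVec, ← pow_succ']

theorem eq_of_eq_add_smul_mulVec (hM : M ∈ rowStochastic ℝ n) (hγ : |γ| < 1) {w u v : n → ℝ}
    (hu : u = w + γ • (M *ᵥ u)) (hv : v = w + γ • (M *ᵥ v)) : u = v := by
  have hd : u - v = γ • (M *ᵥ (u - v)) := by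
    calc u - v = (w + γ • (M *ᵥ u)) - (w + γ • (M *ᵥ v)) := by rw [← hu, ← hv]
      _ = γ • (M *ᵥ (u - v)) := by rw [mulVec_sub, smul_sub]; abel
  have hle : ‖u - v‖ ≤ |γ| * ‖u - v‖ := by
    calc ‖u - v‖ = |γ| * ‖M *ᵥ (u - v)‖ := by rw [← Real.norm_eq_abs, ← norm_smul, ← hd]
      _ ≤ |γ| * ‖u - v‖ := by gcongr; exact norm_mulVec_le_of_mem_rowStochastic hM _
  have hzero : ‖u - v‖ = 0 := by nlinarith [norm_nonneg (u - v)]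
  exact sub_eq_zero.1 (norm_eq_zero.1 hzero)

end Matrix

open Matrix

section

omit [Nonempty S] [Nonempty A]

variable {P : A → S → S → ℝ} {π : S → A → ℝ} {r : S × A → ℝ} {γ : ℝ}

theorem Mmat_mem_rowStochastic (hP : IsTransition P) (hπ : IsPolicy π) :
    Mmat π P ∈ rowStochastic ℝ S := by
  refine mem_rowStochastic_iff_sum.2 ⟨fun s s' => ?_, fun s => ?_⟩
  · exact sum_nonneg fun a _ => mul_nonneg (hπ.1 s a) (hP.1 a s s')
  · simp only [Mmat, of_apply]
    rw [sum_comm]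
    simp only [← mul_sum, hP.2, mul_one, hπ.2]

theorem Vval_eq_tsum (hP : IsTransition P) (hπ : IsPolicy π) (hγ : |γ| < 1) :
    Vval π P r γ = ∑' t : ℕ, γ ^ t • (Mmat π P ^ t *ᵥ rpi π r) := by
  ext s
  rw [tsum_apply (summable_pow_smul_pow_mulVec (Mmat_mem_rowStochastic hP hπ) hγ _)]
  rfl

theorem Vval_eq_rpi_add (hP : IsTransition P) (hπ : IsPolicy π) (hγ : |γ| < 1) :
    Vval π P r γ = rpi π r + γ • (Mmat π P *ᵥ Vval π P r γ) := by
  rw [Vval_eq_tsum hP hπ hγ]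
  exact tsum_pow_smul_pow_mulVec_eq_add (Mmat_mem_rowStochastic hP hπ) hγ _

/-- Potential-based reward shaping of `r` by the potential `Φ` (Ng, Harada and Russell). -/
def shapedReward (P : A → S → S → ℝ) (r : S × A → ℝ) (γ : ℝ) (Φ : S → ℝ) : S × A → ℝ :=
  fun p => r p + γ * ∑ s', P p.2 p.1 s' * Φ s' - Φ p.1

omit [DecidableEq S] in
theorem rpi_shapedReward (hπ : ∀ s, ∑ a, π s a = 1) (Φ : S → ℝ) :
    rpi π (shapedReward P r γ Φ) = rpi π r + γ • (Mmat π P *ᵥ Φ) - Φ := by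
  ext s
  have hMΦ : (Mmat π P *ᵥ Φ) s = ∑ a, π s a * ∑ s', P a s s' * Φ s' := by
    simp only [mulVec, dotProduct, Mmat, of_apply, sum_mul, mul_sum, mul_assoc]
    exact sum_comm
  simp only [rpi, shapedReward, Pi.add_apply, Pi.sub_apply, Pi.smul_apply, smul_eq_mul, hMΦ,
    mul_sub, mul_add, sum_sub_distrib, sum_add_distrib, ← sum_mul, hπ, one_mul, mul_sum,
    mul_left_comm (π s _) γ]

theorem Vval_shapedReward (hP : IsTransition P) (hπ : IsPolicy π) (hγ : |γ| < 1)
    (Φ : S → ℝ) : Vval π P (shapedReward P r γ Φ) γ = Vval π P r γ - Φ := by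
  refine eq_of_eq_add_smul_mulVec (Mmat_mem_rowStochastic hP hπ) hγ
    (Vval_eq_rpi_add hP hπ hγ) ?_
  conv_lhs => rw [Vval_eq_rpi_add hP hπ hγ]
  rw [rpi_shapedReward hπ.2, mulVec_sub, smul_sub]
  abel

theorem Vval_advantage (hP : IsTransition P) (hπ : IsPolicy π) (hγ : |γ| < 1)
    (πbar : S → A → ℝ) :
    Vval π P (fun p => Adv πbar P r γ p.1 p.2) γ = Vval π P r γ - Vval πbar P r γ :=
  Vval_shapedReward hP hπ hγ _

end

theorem advantage_reward_preserves_value_differences_general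
    (P : A → S → S → ℝ) (π π' πbar : S → A → ℝ)
    (hP : IsTransition P) (hπ : IsPolicy π) (hπ' : IsPolicy π')
    (r : S × A → ℝ) (γ : ℝ) (hγ : γ ∈ Set.Ioo (0 : ℝ) 1) (s : S) :
    Vval π P r γ s - Vval π' P r γ s
      = Vval π P (fun p => Adv πbar P r γ p.1 p.2) γ s
        - Vval π' P (fun p => Adv πbar P r γ p.1 p.2) γ s := by
  have hγ' : |γ| < 1 := abs_lt.2 ⟨by linarith [hγ.1], hγ.2⟩
  rw [Vval_advantage hP hπ hγ', Vval_advantage hP hπ' hγ', Pi.sub_apply, Pi.sub_apply]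
  ring

/-- **Advantage reward preserves value differences across policies (fixed discount).**
`V(π,P,r,γ)(s) − V(π',P,r,γ)(s) = V(π,P,r̃,γ)(s) − V(π',P,r̃,γ)(s)`
where `r̃ = Δ(π̄,P,r,γ)`. -/
theorem advantage_reward_preserves_value_differences
    (P : A → S → S → ℝ) (π π' πbar : S → A → ℝ)
    (hP : IsTransition P) (hπ : IsPolicy π) (hπ' : IsPolicy π') (hπbar : IsPolicy πbar)
    (r : S × A → ℝ) (γ : ℝ) (hγ : γ ∈ Set.Ioo (0 : ℝ) 1) (s : S) :
    Vval π P r γ s - Vval π' P r γ s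
      = Vval π P (fun p => Adv πbar P r γ p.1 p.2) γ s
        - Vval π' P (fun p => Adv πbar P r γ p.1 p.2) γ s :=
  advantage_reward_preserves_value_differences_general P π π' πbar hP hπ hπ' r γ hγ s
end
end

section
/- Lemma (lottery preferences via relative value, Markov form): Let (π,P) be unichain and let r : S × A → ℝ. For a partial trajectory h = ([(s_0,a_0),…,(s_{T−1},a_{T−1})], z), the expected discounted return of the Markov lottery induced by (π,P) starting with h is v(π,P,r,γ)(h) = ∑_{t=0}^{T−1} γ^t r(s_t,a_t) + γ^T V(π,P,r,γ)(z). Then for all partial trajectories h, h', the limit lim_{γ→1⁻} ( v(π,P,r,γ)(h) − v(π,P,r,γ)(h') ) exists and equals B(r̃,Ṽ)(h) − B(r̃,Ṽ)(h'), where r̃ = r̃(π,P,r) is the relative reward and Ṽ = Ṽ(π,P,r) is the relative value function. -/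
open Filter Finset Topology

noncomputable section

variable {S A : Type} [Fintype S] [DecidableEq S] [Fintype A] [Nonempty S] [Nonempty A]

/-- `(π, P)` is unichain with limiting distribution `μ`: for every `s'`, the Cesàro
averages of `(M(π,P)^t)(s,s')` converge to `μ s'`, independently of `s`. -/
def Unichain (π : S → A → ℝ) (P : A → S → S → ℝ) (μ : S → ℝ) : Prop :=
  ∀ s s', Tendsto (fun T : ℕ => (∑ t ∈ range T, (Mmat π P ^ t) s s') / (T : ℝ))
    atTop (𝓝 (μ s'))

/-- The bootstrapped return of a partial trajectory `h = (pairs, z)`. -/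
def Breturn (r : S × A → ℝ) (V : S → ℝ) (h : List (S × A) × S) : ℝ :=
  (h.1.map r).sum + V h.2

/-!
Shifting the reward by a constant `c` shifts the discounted value function by `c / (1 - γ)`,
because powers of a row-stochastic matrix fix constant vectors; the same shift then appears in
the discounted return of every partial trajectory, since `∑_{t<T} γ^t + γ^T / (1 - γ) = 1/(1 - γ)`.
Taking `c` to be the average reward, the divergent shift cancels in the difference of two
returns; what remains are the discounted returns of the relative reward `r̃`, which converge to
the bootstrapped returns `B(r̃,Ṽ)` because the discounted value of `r̃` tends to `Ṽ`.
-/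

open Matrix

namespace Matrix

variable {n : Type*} [Fintype n] [DecidableEq n] {M : Matrix n n ℝ}

lemma abs_mulVec_le_sum_abs_of_mem_rowStochastic (hM : M ∈ rowStochastic ℝ n)
    (v : n → ℝ) (i : n) : |(M *ᵥ v) i| ≤ ∑ j, |v j| :=
  calc |∑ j, M i j * v j| ≤ ∑ j, |M i j * v j| := abs_sum_le_sum_abs _ _
    _ ≤ ∑ j, |v j| := sum_le_sum fun j _ => by
      rw [abs_mul, abs_of_nonneg (nonneg_of_mem_rowStochastic hM)]
      exact mul_le_of_le_one_left (abs_nonneg _) (le_one_of_mem_rowStochastic hM)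

lemma mulVec_sub_const_of_mem_rowStochastic (hM : M ∈ rowStochastic ℝ n)
    (v : n → ℝ) (c : ℝ) : M *ᵥ (fun j => v j - c) = fun i => (M *ᵥ v) i - c := by
  ext i
  simp only [mulVec, dotProduct, mul_sub, sum_sub_distrib, ← sum_mul,
    sum_row_of_mem_rowStochastic hM, one_mul]

lemma summable_geometric_mul_pow_mulVec (hM : M ∈ rowStochastic ℝ n) (v : n → ℝ) (i : n)
    {γ : ℝ} (h0 : 0 ≤ γ) (h1 : γ < 1) :
    Summable fun k : ℕ => γ ^ k * (M ^ k *ᵥ v) i := by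
  refine Summable.of_norm_bounded
    ((summable_geometric_of_lt_one h0 h1).mul_left (∑ j, |v j|)) fun k => ?_
  rw [Real.norm_eq_abs, abs_mul, abs_pow, abs_of_nonneg h0, mul_comm]
  exact mul_le_mul_of_nonneg_right
    (abs_mulVec_le_sum_abs_of_mem_rowStochastic (pow_mem hM k) v i) (pow_nonneg h0 k)

lemma tsum_geometric_mul_pow_mulVec_sub_const (hM : M ∈ rowStochastic ℝ n) (v : n → ℝ)
    (c : ℝ) (i : n) {γ : ℝ} (h0 : 0 ≤ γ) (h1 : γ < 1) :
    ∑' k : ℕ, γ ^ k * (M ^ k *ᵥ fun j => v j - c) i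
      = ∑' k : ℕ, γ ^ k * (M ^ k *ᵥ v) i - c * (1 - γ)⁻¹ := by
  simp only [mulVec_sub_const_of_mem_rowStochastic (pow_mem hM _), mul_sub]
  rw [(summable_geometric_mul_pow_mulVec hM v i h0 h1).tsum_sub
      ((summable_geometric_of_lt_one h0 h1).mul_right c),
    tsum_mul_right, tsum_geometric_of_lt_one h0 h1, mul_comm]

end Matrix

section Lottery

variable {S A : Type} [Fintype A]

lemma rpi_sub_const {π : S → A → ℝ} (hπ : IsPolicy π) (r : S × A → ℝ) (c : ℝ) :
    rpi π (fun p => r p - c) = fun s => rpi π r s - c := by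
  ext s
  simp [rpi, mul_sub, sum_sub_distrib, ← sum_mul, hπ.2 s]

variable [Fintype S] [DecidableEq S]

lemma mmat_mem_rowStochastic {π : S → A → ℝ} {P : A → S → S → ℝ} (hπ : IsPolicy π)
    (hP : IsTransition P) : Mmat π P ∈ rowStochastic ℝ S := by
  refine mem_rowStochastic_iff_sum.2 ⟨fun s s' => ?_, fun s => ?_⟩
  · exact sum_nonneg fun a _ => mul_nonneg (hπ.1 s a) (hP.1 a s s')
  · simp only [Mmat, of_apply]
    rw [sum_comm]
    simp [← mul_sum, hP.2, hπ.2 s]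

lemma vval_sub_const {π : S → A → ℝ} {P : A → S → S → ℝ} (hπ : IsPolicy π)
    (hP : IsTransition P) (r : S × A → ℝ) (c : ℝ) {γ : ℝ} (h0 : 0 ≤ γ) (h1 : γ < 1)
    (s : S) : Vval π P (fun p => r p - c) γ s = Vval π P r γ s - c * (1 - γ)⁻¹ := by
  rw [Vval, rpi_sub_const hπ]
  exact tsum_geometric_mul_pow_mulVec_sub_const (mmat_mem_rowStochastic hπ hP) _ c s h0 h1

/-- The paper's `v(π,P,r,γ)(h)`. -/
def lotteryReturn (π : S → A → ℝ) (P : A → S → S → ℝ) (r : S × A → ℝ) (γ : ℝ)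
    (h : List (S × A) × S) : ℝ :=
  (∑ t : Fin h.1.length, γ ^ (t : ℕ) * r (h.1.get t)) + γ ^ h.1.length * Vval π P r γ h.2

lemma lotteryReturn_sub_const {π : S → A → ℝ} {P : A → S → S → ℝ} (hπ : IsPolicy π)
    (hP : IsTransition P) (r : S × A → ℝ) (c : ℝ) {γ : ℝ} (h0 : 0 ≤ γ) (h1 : γ < 1)
    (h : List (S × A) × S) :
    lotteryReturn π P (fun p => r p - c) γ h = lotteryReturn π P r γ h - c * (1 - γ)⁻¹ := by
  have hgeom : (∑ t ∈ range h.1.length, γ ^ t) * (1 - γ) = 1 - γ ^ h.1.length := by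
    rw [← neg_sub γ 1, mul_neg, geom_sum_mul]; ring
  have hγ : (1 - γ) * (1 - γ)⁻¹ = 1 := mul_inv_cancel₀ (sub_ne_zero.2 h1.ne')
  simp only [lotteryReturn, vval_sub_const hπ hP r c h0 h1, mul_sub, sum_sub_distrib,
    ← sum_mul, Fin.sum_univ_eq_sum_range (fun t => γ ^ t)]
  linear_combination (-(c * (1 - γ)⁻¹)) * hgeom
    + c * (∑ t ∈ range h.1.length, γ ^ t) * hγ

lemma tendsto_lotteryReturn {π : S → A → ℝ} {P : A → S → S → ℝ} {r : S × A → ℝ}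
    {V : S → ℝ} {h : List (S × A) × S}
    (hV : Tendsto (fun γ => Vval π P r γ h.2) (𝓝[<] 1) (𝓝 (V h.2))) :
    Tendsto (fun γ => lotteryReturn π P r γ h) (𝓝[<] 1) (𝓝 (Breturn r V h)) := by
  have hpoly : Tendsto (fun γ : ℝ => ∑ t : Fin h.1.length, γ ^ (t : ℕ) * r (h.1.get t))
      (𝓝[<] 1) (𝓝 ((h.1.map r).sum)) := by
    have hcont : Continuous fun γ : ℝ => ∑ t : Fin h.1.length, γ ^ (t : ℕ) * r (h.1.get t) := by
      fun_prop
    simpa using (hcont.tendsto 1).mono_left nhdsWithin_le_nhds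
  have hpow : Tendsto (fun γ : ℝ => γ ^ h.1.length) (𝓝[<] 1) (𝓝 1) := by
    simpa using ((continuous_pow (M := ℝ) h.1.length).tendsto 1).mono_left nhdsWithin_le_nhds
  have hlim := hpoly.add (hpow.mul hV)
  rw [one_mul] at hlim
  exact hlim

end Lottery

theorem lottery_preferences_via_relative_value_general
    (π : S → A → ℝ) (P : A → S → S → ℝ)
    (hπ : IsPolicy π) (hP : IsTransition P)
    (μ : S → ℝ)
    (r : S × A → ℝ)
    (Vrel : S → ℝ)
    (hVrel : ∀ s : S, Tendsto
      (fun γ : ℝ => ∑' k : ℕ, γ ^ k *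
        ((Mmat π P ^ k).mulVec (fun s' => rpi π r s' - ∑ s'', μ s'' * rpi π r s'')) s)
      (𝓝[<] (1 : ℝ)) (𝓝 (Vrel s)))
    (h h' : List (S × A) × S) :
    Tendsto
      (fun γ : ℝ =>
        ((∑ t : Fin h.1.length, γ ^ (t : ℕ) * r (h.1.get t))
            + γ ^ h.1.length * Vval π P r γ h.2)
          - ((∑ t : Fin h'.1.length, γ ^ (t : ℕ) * r (h'.1.get t))
            + γ ^ h'.1.length * Vval π P r γ h'.2))
      (𝓝[<] (1 : ℝ))
      (𝓝 (Breturn (fun p => r p - ∑ s'', μ s'' * rpi π r s'') Vrel h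
            - Breturn (fun p => r p - ∑ s'', μ s'' * rpi π r s'') Vrel h')) := by
  set c := ∑ s'', μ s'' * rpi π r s''
  have hV : ∀ s, Tendsto (fun γ => Vval π P (fun p => r p - c) γ s) (𝓝[<] 1) (𝓝 (Vrel s)) :=
    fun s => by simpa only [Vval, rpi_sub_const hπ] using hVrel s
  have hshift : ∀ᶠ γ in 𝓝[<] (1 : ℝ),
      lotteryReturn π P (fun p => r p - c) γ h - lotteryReturn π P (fun p => r p - c) γ h'
        = lotteryReturn π P r γ h - lotteryReturn π P r γ h' := by
    filter_upwards [Ioo_mem_nhdsLT zero_lt_one] with γ hγ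
    rw [lotteryReturn_sub_const hπ hP r c hγ.1.le hγ.2,
      lotteryReturn_sub_const hπ hP r c hγ.1.le hγ.2]
    ring
  exact ((tendsto_lotteryReturn (hV h.2)).sub (tendsto_lotteryReturn (hV h'.2))).congr' hshift

/-- **Lottery preferences via relative value (Markov form).** For partial trajectories
`h, h'`, with `v(π,P,r,γ)(h) = ∑_{t<T} γ^t r(s_t,a_t) + γ^T V(π,P,r,γ)(z)` the expected
discounted return of the Markov lottery induced by `(π,P)` starting with `h`,
the limit `lim_{γ→1⁻} ( v(π,P,r,γ)(h) − v(π,P,r,γ)(h') )` exists and equals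
`B(r̃,Ṽ)(h) − B(r̃,Ṽ)(h')`, where `r̃` is the relative reward and `Ṽ` the relative value
function. -/
theorem lottery_preferences_via_relative_value
    (π : S → A → ℝ) (P : A → S → S → ℝ)
    (hπ : IsPolicy π) (hP : IsTransition P)
    (μ : S → ℝ) (huni : Unichain π P μ)
    (r : S × A → ℝ)
    (Vrel : S → ℝ)
    (hVrel : ∀ s : S, Tendsto
      (fun γ : ℝ => ∑' k : ℕ, γ ^ k *
        ((Mmat π P ^ k).mulVec (fun s' => rpi π r s' - ∑ s'', μ s'' * rpi π r s'')) s)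
      (𝓝[<] (1 : ℝ)) (𝓝 (Vrel s)))
    (h h' : List (S × A) × S) :
    Tendsto
      (fun γ : ℝ =>
        ((∑ t : Fin h.1.length, γ ^ (t : ℕ) * r (h.1.get t))
            + γ ^ h.1.length * Vval π P r γ h.2)
          - ((∑ t : Fin h'.1.length, γ ^ (t : ℕ) * r (h'.1.get t))
            + γ ^ h'.1.length * Vval π P r γ h'.2))
      (𝓝[<] (1 : ℝ))
      (𝓝 (Breturn (fun p => r p - ∑ s'', μ s'' * rpi π r s'') Vrel h
            - Breturn (fun p => r p - ∑ s'', μ s'' * rpi π r s'') Vrel h')) :=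
  lottery_preferences_via_relative_value_general π P hπ hP μ r Vrel hVrel h h'
end
end
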